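/- A dibaric algebra (A, (f,g)) is conservative if and only if the product xy depends only upon the residue classes of x and y modulo J_f^⊥; that is, J_f^⊥ = ann A holds if and only if for all x, x', y, y' ∈ A with x − x' ∈ J_f^⊥ and y − y' ∈ J_f^⊥ one has xy = x'y'. -/

import Mathlib

/-!
The annihilator always lies in `J_f^⊥`: for `z ∈ ann A` and `F ∈ J_f` the invariance identity
reads `f z F y + f y F z = 0` for every `y`, and choosing `y = z` or `y` with `f y ≠ 0` forces
`F z = 0`. Hence conservativity amounts to `J_f^⊥ ⊆ ann A`, and by bilinearity and commutativity
this is the same as the product being well defined on residue classes modulo `J_f^⊥`.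
-/

namespace DibaricAlgebra

variable {K A : Type*} [Field K] [AddCommGroup A] [Module K A]

def IsInvariantForm (mul : A →ₗ[K] A →ₗ[K] A) (f F : A →ₗ[K] K) : Prop :=
  ∀ a b : A, F (mul a b) = (f a * F b + f b * F a) / 2

def invariantFormsPerp (mul : A →ₗ[K] A →ₗ[K] A) (f : A →ₗ[K] K) : Set A :=
  {z | ∀ F : A →ₗ[K] K, IsInvariantForm mul f F → F z = 0}

def annihilator (mul : A →ₗ[K] A →ₗ[K] A) : Set A :=
  {z | ∀ t : A, mul z t = 0}

theorem annihilator_subset_invariantFormsPerp [NeZero (2 : K)] {mul : A →ₗ[K] A →ₗ[K] A}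
    {f : A →ₗ[K] K} (hf : f ≠ 0) : annihilator mul ⊆ invariantFormsPerp mul f := by
  intro z hz F hF
  have key : ∀ y, f z * F y + f y * F z = 0 := fun y => by
    simpa [hz y, two_ne_zero] using (hF z y).symm
  by_cases hfz : f z = 0
  · obtain ⟨y, hy⟩ : ∃ y, f y ≠ 0 := by
      by_contra! h
      exact hf (LinearMap.ext h)
    simpa [hfz, hy] using key y
  · have hzz : 2 * (f z * F z) = 0 := by linear_combination key z
    simpa [hfz, two_ne_zero] using hzz

theorem mul_eq_mul_of_sub_mem_annihilator {mul : A →ₗ[K] A →ₗ[K] A}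
    (hcomm : ∀ x y : A, mul x y = mul y x) {x x' y y' : A}
    (hx : x - x' ∈ annihilator mul) (hy : y - y' ∈ annihilator mul) :
    mul x y = mul x' y' := by
  have hxy : mul x y = mul x' y := by
    simpa [sub_eq_zero] using hx y
  have hyx : mul y x' = mul y' x' := by
    simpa [sub_eq_zero] using hy x'
  rw [hxy, hcomm x' y, hyx, hcomm]

theorem invariantFormsPerp_subset_annihilator {mul : A →ₗ[K] A →ₗ[K] A} {f : A →ₗ[K] K}
    (h : ∀ x x' y y' : A, x - x' ∈ invariantFormsPerp mul f →
      y - y' ∈ invariantFormsPerp mul f → mul x y = mul x' y') :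
    invariantFormsPerp mul f ⊆ annihilator mul := by
  intro z hz t
  have hzero : (0 : A) ∈ invariantFormsPerp mul f := fun F _ => map_zero F
  simpa using h z 0 t t (by simpa using hz) (by simpa using hzero)

end DibaricAlgebra

open DibaricAlgebra in
theorem stmt_5 (A : Type*) [AddCommGroup A] [Module ℝ A]
    (mul : A →ₗ[ℝ] A →ₗ[ℝ] A)
    (hcomm : ∀ x y : A, mul x y = mul y x)
    (f : A →ₗ[ℝ] ℝ) (hf : f ≠ 0) :
    ({z : A | ∀ F : A →ₗ[ℝ] ℝ,
        (∀ a b : A, F (mul a b) = (f a * F b + f b * F a) / 2) → F z = 0}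
      = {z : A | ∀ t : A, mul z t = 0})
    ↔
    (∀ x x' y y' : A,
      (∀ F : A →ₗ[ℝ] ℝ,
        (∀ a b : A, F (mul a b) = (f a * F b + f b * F a) / 2) → F (x - x') = 0) →
      (∀ F : A →ₗ[ℝ] ℝ,
        (∀ a b : A, F (mul a b) = (f a * F b + f b * F a) / 2) → F (y - y') = 0) →
      mul x y = mul x' y') := by
  change invariantFormsPerp mul f = annihilator mul ↔
    ∀ x x' y y', x - x' ∈ invariantFormsPerp mul f → y - y' ∈ invariantFormsPerp mul f →
      mul x y = mul x' y'
  constructor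
  · intro hcons x x' y y' hx hy
    rw [hcons] at hx hy
    exact mul_eq_mul_of_sub_mem_annihilator hcomm hx hy
  · intro hres
    exact (invariantFormsPerp_subset_annihilator hres).antisymm
      (annihilator_subset_invariantFormsPerp hf)
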